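/- arXiv:2602.24031 — 2 statements merged into one kernel-verified Lean document; each statement's English description precedes it below -/
import Mathlib

section
/- Let R be a sieve over an étale ℚ-algebra K (not assumed Erdős) and (I_N) any Følner sequence in O_K. Then the upper density of the R-free numbers satisfies d̄_I(F_R) ≤ ∏_{i≥1} (1 − |R_i|/N(𝔟_i)). -/
open Filter Topology MeasureTheory Pointwise symmDiff

noncomputable section

namespace ErdosSieve

variable {O : Type} [CommRing O]

/-- A sieve over (the ring of integers of) an étale `ℚ`-algebra: a sequence of pairwise
coprime invertible (i.e. finite-quotient) ideals `b i` together with, for each `i`, a finite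
set `gen i` of representatives, so that the sieved-out set is `R_i = gen i + b i`, which is
required to be a proper subset of the ring. -/
structure Sieve (O : Type) [CommRing O] : Type where
  b : ℕ → Ideal O
  gen : ℕ → Finset O
  coprime : ∀ i j, i ≠ j → b i ⊔ b j = ⊤
  finQuot : ∀ i, Finite (O ⧸ b i)
  ne_univ : ∀ i, (↑(gen i) : Set O) + (↑(b i) : Set O) ≠ Set.univ

/-- The `i`-th sieved-out set `R_i = gen i + b i`. -/
def Sieve.RSet (S : Sieve O) (i : ℕ) : Set O := (↑(S.gen i) : Set O) + (↑(S.b i) : Set O)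

/-- The set `F_R` of `R`-free numbers. -/
def Sieve.FR (S : Sieve O) : Set O := (⋃ i, S.RSet i)ᶜ

/-- The norm `N(b i)` of the `i`-th ideal. -/
def Sieve.normb (S : Sieve O) (i : ℕ) : ℕ := Nat.card (O ⧸ S.b i)

/-- The number `|R_i|` of residue classes modulo `b i` met by `R_i`. -/
def Sieve.cardR (S : Sieve O) (i : ℕ) : ℕ :=
  Nat.card ((Ideal.Quotient.mk (S.b i)) '' (S.RSet i))

/-- A sieve is Erdős if `∑ |R_i| / N(b_i) < ∞`. -/
def Sieve.IsErdos (S : Sieve O) : Prop :=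
  Summable fun i => (S.cardR i : ℝ) / (S.normb i : ℝ)

/-- A Følner sequence: finite nonempty subsets of `O` which are asymptotically
translation-invariant. -/
def IsFolner (I : ℕ → Set O) : Prop :=
  (∀ N, (I N).Finite) ∧ (∀ N, (I N).Nonempty) ∧
    ∀ x : O, Tendsto
      (fun N => (Nat.card ↥(((x + ·) '' I N) ∆ (I N)) : ℝ) / (Nat.card ↥(I N) : ℝ))
      atTop (𝓝 0)

/-- Upper density along a (Følner) sequence. -/
def upperDensity (I : ℕ → Set O) (A : Set O) : ℝ :=
  limsup (fun N => (Nat.card ↥(A ∩ I N) : ℝ) / (Nat.card ↥(I N) : ℝ)) atTop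

/-- `A` has density `d` along the sequence `I`. -/
def HasDensity (I : ℕ → Set O) (A : Set O) (d : ℝ) : Prop :=
  Tendsto (fun N => (Nat.card ↥(A ∩ I N) : ℝ) / (Nat.card ↥(I N) : ℝ)) atTop (𝓝 d)

/-- `⋃_{i ≥ L} R i`. -/
def unionGe (R : ℕ → Set O) (L : ℕ) : Set O := ⋃ i, ⋃ (_ : L ≤ i), R i

/-- `⋃_{i < L} R i`. -/
def unionLt (R : ℕ → Set O) (L : ℕ) : Set O := ⋃ i, ⋃ (_ : i < L), R i

/-- The weak light tails property for a family of sieved-out sets: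
`limsup`-density of `⋃_{i ≥ L} R_i ∖ ⋃_{j < L} R_j` tends to `0` as `L → ∞`. -/
def WeakLightTailsFam (I : ℕ → Set O) (R : ℕ → Set O) : Prop :=
  Tendsto (fun L => upperDensity I (unionGe R L \ unionLt R L)) atTop (𝓝 0)

/-- The strong light tails property for a family of sieved-out sets. -/
def StrongLightTailsFam (I : ℕ → Set O) (R : ℕ → Set O) : Prop :=
  Tendsto (fun L => upperDensity I (unionGe R L)) atTop (𝓝 0)

/-- A sieve has weak light tails for `I` if it is Erdős and the tail differences have
vanishing upper density. -/
def Sieve.HasWeakLightTails (S : Sieve O) (I : ℕ → Set O) : Prop :=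
  S.IsErdos ∧ WeakLightTailsFam I S.RSet

/-- A sieve has strong light tails for `I` if it is Erdős and the tails have vanishing
upper density. -/
def Sieve.HasStrongLightTails (S : Sieve O) (I : ℕ → Set O) : Prop :=
  S.IsErdos ∧ StrongLightTailsFam I S.RSet

/-- The infinite product `∏_i (1 - |R_i|/N(b_i))`, realized as the infimum of the
(nonincreasing) sequence of partial products, i.e. as its limit. -/
def Sieve.prodDensity (S : Sieve O) : ℝ :=
  ⨅ L : ℕ, ∏ i ∈ Finset.range L, (1 - (S.cardR i : ℝ) / (S.normb i : ℝ))

/-- `A` is an `R`-admissible set: `-A + R_i ≠ O` for all `i`. -/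
def Sieve.Admissible (S : Sieve O) (A : Set O) : Prop :=
  ∀ i, -A + S.RSet i ≠ Set.univ

/-- The number `|-A + R_i|` of residue classes modulo `b i` met by `-A + R_i`. -/
def Sieve.cardShift (S : Sieve O) (A : Set O) (i : ℕ) : ℕ :=
  Nat.card ((Ideal.Quotient.mk (S.b i)) '' (-A + S.RSet i))

/-- The infinite product `∏_i (1 - |-A + R_i|/N(b_i))` (as the infimum of the
partial products). -/
def Sieve.prodDensityShift (S : Sieve O) (A : Set O) : ℝ :=
  ⨅ L : ℕ, ∏ i ∈ Finset.range L, (1 - (S.cardShift A i : ℝ) / (S.normb i : ℝ))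

/-- A subset `Y` of `O` is syndetic if finitely many translates of it cover `O`. -/
def Syndetic (Y : Set O) : Prop := ∃ C : Finset O, Y + (↑C : Set O) = Set.univ

-- Indicator of a subset of `O`, i.e. a point of the shift space `{0,1}^O`.
open Classical in
def chiSet (A : Set O) : O → Bool := fun x => if x ∈ A then true else false

/-- The shift action `S_a(A) = A - a` on `{0,1}^O`: `χ_{A - a}(x) = χ_A (x + a)`. -/
def shiftB (a : O) (f : O → Bool) : O → Bool := fun x => f (x + a)

/-- The odometer group `G_R = ∏ i, O ⧸ b i`. -/
abbrev Sieve.GR (S : Sieve O) : Type := ∀ i : ℕ, O ⧸ S.b i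

-- The map `φ_R : G_R → {0,1}^O`: `a ∈ φ_R(g)` iff `a + g i` avoids (the image of) `R_i`
-- modulo `b i` for every `i`.
open Classical in
def Sieve.phiB (S : Sieve O) (g : S.GR) : O → Bool := fun a =>
  if (∀ i, (Ideal.Quotient.mk (S.b i) a + g i) ∉ (Ideal.Quotient.mk (S.b i)) '' (S.RSet i))
  then true else false

/-- The Mirsky measure `ν_R` on `{0,1}^O`: the pushforward under `φ_R` of the Haar
probability measure of the compact group `G_R` (each factor being finite and discrete,
and the Haar measure being normalized so that the whole group has measure `1`). -/
def Sieve.mirsky (S : Sieve O) : Measure (O → Bool) := by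
  letI : ∀ i, TopologicalSpace (O ⧸ S.b i) := fun _ => ⊥
  haveI : ∀ i, DiscreteTopology (O ⧸ S.b i) := fun _ => ⟨rfl⟩
  haveI : ∀ i, Finite (O ⧸ S.b i) := S.finQuot
  haveI : ∀ i, IsTopologicalAddGroup (O ⧸ S.b i) := fun i => { }
  letI : MeasurableSpace S.GR := borel _
  haveI : BorelSpace S.GR := ⟨rfl⟩
  exact Measure.map S.phiB (Measure.addHaarMeasure (G := S.GR) ⊤)

/-- The ring of integers of the étale `ℚ`-algebra `K 0 × ⋯ × K (m-1)`. -/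
abbrev OK {m : ℕ} (K : Fin m → Type) [∀ j, Field (K j)] [∀ j, NumberField (K j)] : Type :=
  ∀ j, NumberField.RingOfIntegers (K j)

variable {m : ℕ} (K : Fin m → Type) [∀ j, Field (K j)] [∀ j, NumberField (K j)]

/-- The "ball" `B_N` in `O_K`: elements all of whose archimedean embeddings have absolute
value at most `N` (the max over embeddings of all the number-field components). -/
def ball (N : ℕ) : Set (OK K) :=
  {x | ∀ j, ∀ φ : K j →+* ℂ,
    ‖φ (algebraMap (NumberField.RingOfIntegers (K j)) (K j) (x j))‖ ≤ N}

/-!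
Fix `L`. An `R`-free number reduces modulo `b 0, …, b (L-1)` to a tuple of residues avoiding the
images of `R_0, …, R_{L-1}`; by the Chinese remainder theorem these tuples form the proportion
`∏_{i<L} (1 - |R_i|/N(b_i))` of `∏_{i<L} O/b_i`. Along a Følner sequence all fibres of a
surjection `π : O →+ Q` onto a finite group have the same density `1/|Q|`: translation by `y`
carries one fibre onto another and moves `I_N` only by `(y + I_N) ∆ I_N`. Hence the upper
density of `F_R` is bounded by every partial product, and so by their infimum.
-/

section Counting

variable {α : Type*}

lemma ncard_inter_le_ncard_inter_add_ncard_symmDiff (X : Set α) {A B : Set α}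
    (hA : A.Finite) (hB : B.Finite) : (X ∩ A).ncard ≤ (X ∩ B).ncard + (A ∆ B).ncard := by
  have hsub : X ∩ A ⊆ X ∩ B ∪ A ∆ B := by
    rintro x ⟨hxX, hxA⟩
    by_cases hxB : x ∈ B
    · exact Or.inl ⟨hxX, hxB⟩
    · exact Or.inr (Or.inl ⟨hxA, hxB⟩)
  calc (X ∩ A).ncard ≤ (X ∩ B ∪ A ∆ B).ncard :=
        Set.ncard_le_ncard hsub
          ((hB.inter_of_right X).union ((hA.union hB).subset symmDiff_le_sup))
    _ ≤ (X ∩ B).ncard + (A ∆ B).ncard := Set.ncard_union_le _ _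

lemma abs_ncard_inter_sub_ncard_inter_le (X : Set α) {A B : Set α}
    (hA : A.Finite) (hB : B.Finite) :
    |((X ∩ A).ncard : ℝ) - (X ∩ B).ncard| ≤ (A ∆ B).ncard := by
  have hAB : ((X ∩ A).ncard : ℝ) ≤ (X ∩ B).ncard + (A ∆ B).ncard := by
    exact_mod_cast ncard_inter_le_ncard_inter_add_ncard_symmDiff X hA hB
  have hBA : ((X ∩ B).ncard : ℝ) ≤ (X ∩ A).ncard + (A ∆ B).ncard := by
    rw [symmDiff_comm]
    exact_mod_cast ncard_inter_le_ncard_inter_add_ncard_symmDiff X hB hA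
  rw [abs_sub_le_iff]
  constructor <;> linarith

lemma ncard_preimage_inter_eq_sum {β : Type*} (f : α → β) (T : Finset β) {J : Set α}
    (hJ : J.Finite) : (f ⁻¹' T ∩ J).ncard = ∑ b ∈ T, (f ⁻¹' {b} ∩ J).ncard := by
  classical
  have hT : f ⁻¹' T ∩ J = ↑{x ∈ hJ.toFinset | f x ∈ T} := by ext x; simp [and_comm]
  rw [hT, Set.ncard_coe_finset, Finset.card_eq_sum_card_fiberwise
    (s := {x ∈ hJ.toFinset | f x ∈ T}) (t := T) (fun x hx => (Finset.mem_filter.1 hx).2)]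
  refine Finset.sum_congr rfl fun b _ => ?_
  have hb' : f ⁻¹' {b} ∩ J = ↑{x ∈ {x ∈ hJ.toFinset | f x ∈ T} | f x = b} := by
    ext x
    simp only [Finset.coe_filter, Finset.mem_filter, Set.Finite.mem_toFinset]
    aesop
  rw [hb', Set.ncard_coe_finset]

end Counting

section Translation

variable {G Q : Type*} [AddGroup G] [AddGroup Q]

lemma image_add_preimage_singleton (π : G →+ Q) (y : G) (g : Q) :
    (y + ·) '' (π ⁻¹' {g}) = π ⁻¹' {π y + g} := by
  ext x
  simp only [Set.image_add_left, Set.mem_preimage, Set.mem_singleton_iff, map_add, map_neg]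
  rw [neg_add_eq_iff_eq_add]

lemma abs_ncard_fiber_sub_ncard_fiber_le (π : G →+ Q) {J : Set G} (hJ : J.Finite) (y : G)
    (g : Q) : |((π ⁻¹' {π y + g} ∩ J).ncard : ℝ) - (π ⁻¹' {g} ∩ J).ncard| ≤
      (((y + ·) '' J) ∆ J).ncard := by
  have htranslate : (π ⁻¹' {g} ∩ J).ncard = (π ⁻¹' {π y + g} ∩ (y + ·) '' J).ncard := by
    rw [← image_add_preimage_singleton, ← Set.image_inter (add_right_injective y),
      Set.ncard_image_of_injective _ (add_right_injective y)]
  rw [htranslate, symmDiff_comm]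
  exact abs_ncard_inter_sub_ncard_inter_le _ hJ (hJ.image _)

end Translation

lemma upperDensity_le_of_subset_of_hasDensity {O : Type} {I : ℕ → Set O}
    (hI : ∀ N, (I N).Finite) {A B : Set O} (hAB : A ⊆ B) {d : ℝ} (hB : HasDensity I B d) :
    upperDensity I A ≤ d := by
  refine (limsup_le_limsup (Eventually.of_forall fun N => ?_)
    (isCoboundedUnder_le_of_le atTop fun N => by positivity) hB.isBoundedUnder_le).trans_eq
    hB.limsup_eq
  simp only [Nat.card_coe_set_eq]
  gcongr
  exact (hI N).inter_of_right B

section Folner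

variable {O : Type} [CommRing O] {I : ℕ → Set O} {Q : Type*} [AddGroup Q]

lemma IsFolner.ncard_pos (hI : IsFolner I) (N : ℕ) : 0 < (I N).ncard :=
  (Set.ncard_pos (hI.1 N)).2 (hI.2.1 N)

lemma IsFolner.tendsto_ncard_fiber_sub_div (hI : IsFolner I) {π : O →+ Q}
    (hπ : Function.Surjective π) (g g' : Q) :
    Tendsto (fun N => (((π ⁻¹' {g'} ∩ I N).ncard : ℝ) - (π ⁻¹' {g} ∩ I N).ncard) /
      (I N).ncard) atTop (𝓝 0) := by
  obtain ⟨y, hy⟩ := hπ (g' - g)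
  have hg' : g' = π y + g := by rw [hy, sub_add_cancel]
  subst hg'
  refine squeeze_zero_norm (fun N => ?_) (by simpa only [Nat.card_coe_set_eq] using hI.2.2 y)
  rw [Real.norm_eq_abs, abs_div, Nat.abs_cast]
  exact div_le_div_of_nonneg_right (abs_ncard_fiber_sub_ncard_fiber_le π (hI.1 N) y g)
    (Nat.cast_nonneg _)

variable [Finite Q]

lemma IsFolner.hasDensity_preimage_singleton (hI : IsFolner I) {π : O →+ Q}
    (hπ : Function.Surjective π) (g : Q) :
    HasDensity I (π ⁻¹' {g}) (Nat.card Q : ℝ)⁻¹ := by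
  have := Fintype.ofFinite Q
  set c : Q → ℕ → ℝ := fun g N => ((π ⁻¹' {g} ∩ I N).ncard : ℝ)
  have hsum : ∀ N, ∑ g' : Q, c g' N = (I N).ncard := fun N => by
    simpa [c] using congrArg (Nat.cast (R := ℝ))
      (ncard_preimage_inter_eq_sum π Finset.univ (hI.1 N)).symm
  have hc : ∀ N, c g N / (I N).ncard =
      (Nat.card Q : ℝ)⁻¹ * (1 + ∑ g' : Q, (c g N - c g' N) / (I N).ncard) := fun N => by
    have hIN : ((I N).ncard : ℝ) ≠ 0 := by exact_mod_cast (hI.ncard_pos N).ne'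
    have hQ : (Nat.card Q : ℝ) ≠ 0 := by exact_mod_cast Nat.card_pos.ne'
    rw [← Finset.sum_div, Finset.sum_sub_distrib, hsum, Finset.sum_const, Finset.card_univ,
      ← Nat.card_eq_fintype_card, nsmul_eq_mul]
    field_simp
    ring
  have hlim : Tendsto (fun N => (Nat.card Q : ℝ)⁻¹ * (1 + ∑ g' : Q, (c g N - c g' N) /
      (I N).ncard)) atTop (𝓝 ((Nat.card Q : ℝ)⁻¹ * (1 + ∑ _g' : Q, 0))) :=
    (tendsto_finsetSum _ fun g' _ => hI.tendsto_ncard_fiber_sub_div hπ g' g).const_add 1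
      |>.const_mul _
  simp only [Finset.sum_const_zero, add_zero, mul_one] at hlim
  simp only [HasDensity, Nat.card_coe_set_eq]
  exact hlim.congr fun N => (hc N).symm

lemma IsFolner.hasDensity_preimage (hI : IsFolner I) {π : O →+ Q}
    (hπ : Function.Surjective π) (T : Set Q) :
    HasDensity I (π ⁻¹' T) (Nat.card T / Nat.card Q : ℝ) := by
  have := Fintype.ofFinite Q
  classical
  have hsplit : ∀ N, ((π ⁻¹' T ∩ I N).ncard : ℝ) / (I N).ncard =
      ∑ g ∈ T.toFinset, ((π ⁻¹' {g} ∩ I N).ncard : ℝ) / (I N).ncard := fun N => by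
    rw [← Finset.sum_div, ← Nat.cast_sum, ← ncard_preimage_inter_eq_sum π _ (hI.1 N),
      Set.coe_toFinset]
  have hlim := tendsto_finsetSum T.toFinset fun g _ => hI.hasDensity_preimage_singleton hπ g
  rw [Finset.sum_const, nsmul_eq_mul, ← Nat.card_eq_card_toFinset, ← div_eq_mul_inv] at hlim
  simpa only [HasDensity, Nat.card_coe_set_eq, hsplit] using hlim

end Folner

lemma card_pi_compl_div_card_pi {ι : Type*} [Fintype ι] {Q : ι → Type*} [∀ i, Finite (Q i)]
    [∀ i, Nonempty (Q i)] (t : ∀ i, Set (Q i)) :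
    (Nat.card (Set.univ.pi fun i => (t i)ᶜ) : ℝ) / Nat.card (∀ i, Q i) =
      ∏ i, (1 - (Nat.card (t i) : ℝ) / Nat.card (Q i)) := by
  rw [Nat.card_congr (Equiv.Set.univPi _), Nat.card_pi, Nat.card_pi, Nat.cast_prod, Nat.cast_prod,
    ← Finset.prod_div_distrib]
  refine Finset.prod_congr rfl fun i _ => ?_
  have hQ : (Nat.card (Q i) : ℝ) ≠ 0 := by exact_mod_cast Nat.card_pos.ne'
  rw [eq_sub_iff_add_eq, ← add_div, div_eq_one_iff_eq hQ, Nat.card_coe_set_eq,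
    Nat.card_coe_set_eq]
  exact_mod_cast (add_comm _ _).trans (Set.ncard_add_ncard_compl (t i))

namespace Sieve

variable {O : Type} [CommRing O] (S : Sieve O)

attribute [local instance] Sieve.finQuot

lemma mem_RSet_of_mk_mem_image {i : ℕ} {x : O}
    (hx : Ideal.Quotient.mk (S.b i) x ∈ Ideal.Quotient.mk (S.b i) '' S.RSet i) :
    x ∈ S.RSet i := by
  obtain ⟨_, ⟨s, hs, b, hb, rfl⟩, hmk⟩ := hx
  exact ⟨s, hs, b + (x - (s + b)), (S.b i).add_mem hb (Ideal.Quotient.eq.mp hmk.symm), by ring⟩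

def residues (L : ℕ) : O →+ ∀ i : Fin L, O ⧸ S.b i :=
  AddMonoidHom.pi fun i => (Ideal.Quotient.mk (S.b i)).toAddMonoidHom

lemma residues_surjective (L : ℕ) : Function.Surjective (S.residues L) := fun x =>
  let ⟨r, hr⟩ := Ideal.pi_quotient_surjective (I := fun i : Fin L => S.b i)
    (fun i j hij => Ideal.isCoprime_iff_sup_eq.mpr (S.coprime i j (Fin.val_injective.ne hij))) x
  ⟨r, funext hr⟩

def freeResidues (L : ℕ) : Set (∀ i : Fin L, O ⧸ S.b i) :=
  Set.univ.pi fun i => (Ideal.Quotient.mk (S.b i) '' S.RSet i)ᶜ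

lemma FR_subset_preimage_freeResidues (L : ℕ) : S.FR ⊆ S.residues L ⁻¹' S.freeResidues L :=
  fun _ hx i _ hxR => hx (Set.mem_iUnion.2 ⟨i, S.mem_RSet_of_mk_mem_image hxR⟩)

lemma hasDensity_preimage_freeResidues {I : ℕ → Set O} (hI : IsFolner I) (L : ℕ) :
    HasDensity I (S.residues L ⁻¹' S.freeResidues L)
      (∏ i ∈ Finset.range L, (1 - (S.cardR i : ℝ) / S.normb i)) := by
  have hprod := (card_pi_compl_div_card_pi _).trans
    (Fin.prod_univ_eq_prod_range (fun i => 1 - (S.cardR i : ℝ) / S.normb i) L)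
  exact hprod ▸ hI.hasDensity_preimage (S.residues_surjective L) (S.freeResidues L)

end Sieve

theorem upperDensity_FR_le_prod_general
    {m : ℕ} (K : Fin m → Type) [∀ j, Field (K j)]
    [∀ j, NumberField (K j)]
    (S : Sieve (OK K)) (I : ℕ → Set (OK K)) (hI : IsFolner I) :
    upperDensity I S.FR ≤ S.prodDensity :=
  le_ciInf fun L => upperDensity_le_of_subset_of_hasDensity hI.1
    (S.FR_subset_preimage_freeResidues L) (S.hasDensity_preimage_freeResidues hI L)

/-- **The upper density of `F_R` is at most `∏ (1 - |R_i|/N(b_i))`** for every sieve `R`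
(not necessarily Erdős) and every Følner sequence. -/
theorem upperDensity_FR_le_prod
    {m : ℕ} (hm : 0 < m) (K : Fin m → Type) [∀ j, Field (K j)]
    [∀ j, NumberField (K j)]
    (S : Sieve (OK K)) (I : ℕ → Set (OK K)) (hI : IsFolner I) :
    upperDensity I S.FR ≤ S.prodDensity :=
  upperDensity_FR_le_prod_general K S I hI

end ErdosSieve
end
end

section
/- Let K be a number field of degree n and R a sieve over K such that there exists a finite set T ⊆ O_K with R_i ⊆ T + 𝔟_i for every i. If ∑_{i≥1} 1/N(𝔟_i) < ∞, then R is Erdős and has strong light tails for the Følner sequence (B_N). -/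
open Filter Topology MeasureTheory Pointwise symmDiff

noncomputable section

namespace ErdosSieve

variable {O : Type} [CommRing O]

variable {m : ℕ} (K : Fin m → Type) [∀ j, Field (K j)] [∀ j, NumberField (K j)]

/-- **Strong light tails for `B`-free–type sieves over a number field** (Lemma 5.2): if all
`R_i ⊆ T + b_i` for one finite set `T` and `∑ 1/N(b_i) < ∞`, then the sieve is Erdős with
strong light tails for the balls `B_N`. -/
def ballNF (F : Type) [Field F] [NumberField F] (N : ℕ) :
    Set (NumberField.RingOfIntegers F) :=
  {x | ∀ φ : F →+* ℂ, ‖φ (algebraMap (NumberField.RingOfIntegers F) F x)‖ ≤ N}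

/-!
Write a point of `R_i ∩ B_N` as `x = t + β` with `t ∈ T` and `β ∈ 𝔟_i`. If `β ≠ 0` then
`N(𝔟_i) ≤ |N(β)| ≤ (N + C)^n`, where `C` bounds the archimedean absolute values on `T`; so outside
`T` only the finitely many `i` with `N(𝔟_i) ≤ (N + C)^n` contribute. Cutting the Minkowski space
into cubes of side `N(𝔟)^{1/n} / 2`, each cube holds at most one point of a coset of `𝔟`, so a coset
meets `B_N` in `O(N^n / N(𝔟) + 1) = O((N + C)^n / N(𝔟))` points for those `i`, while
`|B_N| ≫ N^n`. Hence `⋃_{i ≥ L} R_i` has upper density `O(∑_{i ≥ L} 1 / N(𝔟_i)) → 0`.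
The Erdős property is just `|R_i| ≤ |T|`.
-/

open NumberField

theorem upperDensity_nonneg {α : Type} (I : ℕ → Set α) (A : Set α) : 0 ≤ upperDensity I A := by
  refine le_limsup_of_frequently_le (Frequently.of_forall fun N => by positivity) ?_
  refine ⟨1, eventually_map.mpr (Eventually.of_forall fun N => ?_)⟩
  rcases (I N).finite_or_infinite with hI | hI
  · exact div_le_one_of_le₀ (by exact_mod_cast Nat.card_mono hI Set.inter_subset_right)
      (by positivity)
  · simp [Set.Infinite.card_eq_zero hI]

theorem upperDensity_le_of_tendsto {α : Type} {I : ℕ → Set α} {A : Set α} {u : ℕ → ℝ} {d : ℝ}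
    (hu : Tendsto u atTop (𝓝 d))
    (h : ∀ᶠ N in atTop, (Nat.card ↥(A ∩ I N) : ℝ) / Nat.card ↥(I N) ≤ u N) :
    upperDensity I A ≤ d :=
  (limsup_le_limsup h (isCoboundedUnder_le_of_eventually_le atTop
    (Eventually.of_forall fun N => by positivity)) hu.isBoundedUnder_le).trans_eq hu.limsup_eq

theorem strongLightTailsFam_of_le {α : Type} {I R : ℕ → Set α} {τ : ℕ → ℝ}
    (hτ : Tendsto τ atTop (𝓝 0)) (h : ∀ L, upperDensity I (unionGe R L) ≤ τ L) :
    StrongLightTailsFam I R :=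
  tendsto_of_tendsto_of_tendsto_of_le_of_le tendsto_const_nhds hτ
    (fun _ => upperDensity_nonneg I _) h

theorem unionGe_eq_iUnion_add {α : Type} (R : ℕ → Set α) (L : ℕ) :
    unionGe R L = ⋃ k, R (k + L) := by
  ext x
  simp only [unionGe, Set.mem_iUnion]
  constructor
  · rintro ⟨i, hi, hx⟩
    exact ⟨i - L, by rwa [Nat.sub_add_cancel hi]⟩
  · rintro ⟨k, hx⟩
    exact ⟨k + L, by omega, hx⟩

theorem Sieve.cardR_le_card_of_subset_add {S : Sieve O} {T : Finset O} {i : ℕ}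
    (hT : S.RSet i ⊆ (T : Set O) + (S.b i : Set O)) : S.cardR i ≤ T.card := by
  have hsub : Ideal.Quotient.mk (S.b i) '' S.RSet i ⊆ Ideal.Quotient.mk (S.b i) '' T := by
    rintro _ ⟨x, hx, rfl⟩
    obtain ⟨t, ht, β, hβ, rfl⟩ := hT hx
    exact ⟨t, ht, by simp [Ideal.Quotient.eq_zero_iff_mem.mpr hβ]⟩
  rw [Sieve.cardR, Nat.card_coe_set_eq, ← Set.ncard_coe_finset]
  exact (Set.ncard_le_ncard hsub (T.finite_toSet.image _)).trans
    (Set.ncard_image_le T.finite_toSet)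

theorem Sieve.isErdos_of_subset_add {S : Sieve O} {T : Finset O}
    (hT : ∀ i, S.RSet i ⊆ (T : Set O) + (S.b i : Set O))
    (hsum : Summable fun i => 1 / (S.normb i : ℝ)) : S.IsErdos := by
  refine (hsum.mul_left (T.card : ℝ)).of_nonneg_of_le (fun i => by positivity) fun i => ?_
  rw [mul_one_div]
  gcongr
  exact_mod_cast S.cardR_le_card_of_subset_add (hT i)

theorem tendsto_add_mul_pow_div_pow (a B C : ℝ) {c : ℝ} (hc : c ≠ 0) {n : ℕ} (hn : n ≠ 0) :
    Tendsto (fun N : ℕ => (a + B * (N + C) ^ n) / (N / c) ^ n) atTop (𝓝 (B * c ^ n)) := by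
  have h := tendsto_one_div_atTop_nhds_zero_nat (𝕜 := ℝ)
  have key : Tendsto (fun N : ℕ => c ^ n * (a * (1 / (N : ℝ)) ^ n + B * (1 + C * (1 / N)) ^ n))
      atTop (𝓝 (c ^ n * (a * 0 ^ n + B * (1 + C * 0) ^ n))) :=
    tendsto_const_nhds.mul ((tendsto_const_nhds.mul (h.pow n)).add
      (tendsto_const_nhds.mul ((tendsto_const_nhds.add (tendsto_const_nhds.mul h)).pow n)))
  simp only [zero_pow hn, mul_zero, add_zero, one_pow, mul_one, zero_add] at key
  rw [mul_comm]
  refine key.congr' ?_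
  filter_upwards [eventually_ge_atTop 1] with N hN
  have hN : (N : ℝ) ≠ 0 := Nat.cast_ne_zero.mpr (by omega)
  have e : 1 + C * (1 / (N : ℝ)) = (N + C) / N := by field_simp
  rw [e, div_pow, div_pow, div_pow, one_pow]
  field_simp

theorem abs_sub_lt_of_floor_div_eq {a b s : ℝ} (hs : 0 < s) (h : ⌊a / s⌋ = ⌊b / s⌋) :
    |a - b| < s := by
  have := Int.abs_sub_lt_one_of_floor_eq_floor h
  rwa [← sub_div, abs_div, abs_of_pos hs, div_lt_one hs] at this

theorem floor_div_mem_Icc {r s : ℝ} (hs : 0 < s) {N : ℝ} (hr : |r| ≤ N) :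
    ⌊r / s⌋ ∈ Finset.Icc (-(⌈N / s⌉₊ : ℤ)) ⌈N / s⌉₊ := by
  rw [abs_le] at hr
  have hceil : N ≤ ⌈N / s⌉₊ * s := (div_le_iff₀ hs).mp (Nat.le_ceil _)
  rw [Finset.mem_Icc, Int.le_floor, Int.floor_le_iff]
  push_cast
  rw [le_div_iff₀ hs, div_lt_iff₀ hs]
  constructor <;> linarith

theorem finite_setOf_le_of_summable_one_div {ι : Type*} {q : ι → ℝ} (hq : ∀ k, 0 < q k)
    (hsum : Summable fun k => 1 / q k) (X : ℝ) : {k | q k ≤ X}.Finite := by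
  have hε : (0 : ℝ) < 1 / (|X| + 1) := by positivity
  refine (eventually_cofinite.mp (hsum.tendsto_cofinite_zero.eventually (gt_mem_nhds hε))).subset
    fun k hk => not_lt.mpr (one_div_le_one_div_of_le (hq k) ?_)
  linarith [hk.out, le_abs_self X]

theorem place_sum_zsmul_le {F ι : Type*} [Field F] (s : Finset ι) (a : ι → ℤ) (v : ι → 𝓞 F)
    (w : InfinitePlace F) :
    w ((∑ j ∈ s, a j • v j : 𝓞 F) : F) ≤ ∑ j ∈ s, |(a j : ℝ)| * w (v j : F) := by
  push_cast
  refine (w.1.sum_le _ _).trans (Finset.sum_le_sum fun j _ => le_of_eq ?_)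
  change w.1 (a j • (v j : F)) = |(a j : ℝ)| * w.1 (v j)
  rw [zsmul_eq_mul, w.1.map_mul, ← InfinitePlace.coe_apply w (a j : F),
    ← InfinitePlace.norm_embedding_eq w (a j : F), map_intCast, Complex.norm_intCast]

section NumberField

variable {F : Type} [Field F] [NumberField F]

theorem Sieve.normb_eq_absNorm (S : Sieve (𝓞 F)) (i : ℕ) :
    S.normb i = Ideal.absNorm (S.b i) := by
  rw [Sieve.normb, Ideal.absNorm_apply, Submodule.cardQuot_apply]

theorem Sieve.absNorm_pos (S : Sieve (𝓞 F)) (i : ℕ) : 0 < Ideal.absNorm (S.b i) := by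
  have := S.finQuot i
  rw [← S.normb_eq_absNorm]
  exact Nat.card_pos

theorem mem_ballNF_iff {N : ℕ} {x : 𝓞 F} :
    x ∈ ballNF F N ↔ ∀ w : InfinitePlace F, w (x : F) ≤ N :=
  (InfinitePlace.le_iff_le _ _).symm

theorem ballNF_finite (N : ℕ) : (ballNF F N).Finite := by
  refine Set.Finite.of_finite_image ((Embeddings.finite_of_norm_le F ℂ N).subset ?_)
    fun a _ b _ h => RingOfIntegers.ext_iff.mpr h
  rintro _ ⟨x, hx, rfl⟩
  exact ⟨x.isIntegral_coe, hx⟩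

theorem absNorm_le_prod_places {b : Ideal (𝓞 F)} {x : 𝓞 F} (hx : x ∈ b) (hx0 : x ≠ 0) :
    (Ideal.absNorm b : ℝ) ≤ ∏ w : InfinitePlace F, w (x : F) ^ w.mult := by
  have hle : (Ideal.absNorm b : ℤ) ≤ |Algebra.norm ℤ x| :=
    Int.le_of_dvd (abs_pos.mpr (Algebra.norm_ne_zero_iff.mpr hx0))
      ((dvd_abs _ _).mpr (Ideal.absNorm_dvd_norm_of_mem hx))
  rw [InfinitePlace.prod_eq_abs_norm, ← Algebra.coe_norm_int]
  exact_mod_cast hle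

theorem absNorm_le_pow_of_places_le {b : Ideal (𝓞 F)} {x : 𝓞 F} (hx : x ∈ b) (hx0 : x ≠ 0)
    {r : ℝ} (h : ∀ w : InfinitePlace F, w (x : F) ≤ r) :
    (Ideal.absNorm b : ℝ) ≤ r ^ Module.finrank ℚ F := by
  calc (Ideal.absNorm b : ℝ) ≤ ∏ w : InfinitePlace F, w (x : F) ^ w.mult :=
        absNorm_le_prod_places hx hx0
    _ ≤ ∏ w : InfinitePlace F, r ^ w.mult :=
        Finset.prod_le_prod (fun w _ => by positivity)
          fun w _ => pow_le_pow_left₀ (by positivity) (h w) _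
    _ = r ^ Module.finrank ℚ F := by
        rw [Finset.prod_pow_eq_pow_sum, InfinitePlace.sum_mult_eq]

theorem absNorm_lt_pow_of_places_lt {b : Ideal (𝓞 F)} {x : 𝓞 F} (hx : x ∈ b) (hx0 : x ≠ 0)
    {r : ℝ} (h : ∀ w : InfinitePlace F, w (x : F) < r) :
    (Ideal.absNorm b : ℝ) < r ^ Module.finrank ℚ F := by
  have hx0' : (x : F) ≠ 0 := RingOfIntegers.coe_ne_zero_iff.mpr hx0
  calc (Ideal.absNorm b : ℝ) ≤ ∏ w : InfinitePlace F, w (x : F) ^ w.mult :=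
        absNorm_le_prod_places hx hx0
    _ < ∏ w : InfinitePlace F, r ^ w.mult :=
        Finset.prod_lt_prod_of_nonempty (fun w _ => pow_pos (InfinitePlace.pos_iff.mpr hx0') _)
          (fun w _ => pow_lt_pow_left₀ (h w) (by positivity) InfinitePlace.mult_ne_zero)
          Finset.univ_nonempty
    _ = r ^ Module.finrank ℚ F := by
        rw [Finset.prod_pow_eq_pow_sum, InfinitePlace.sum_mult_eq]

theorem eq_or_absNorm_le_of_sub_mem {b : Ideal (𝓞 F)} {N : ℕ} {C : ℝ} {x t : 𝓞 F}
    (hx : x ∈ ballNF F N) (ht : ∀ w : InfinitePlace F, w (t : F) ≤ C) (hxt : x - t ∈ b) :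
    x = t ∨ (Ideal.absNorm b : ℝ) ≤ (N + C) ^ Module.finrank ℚ F := by
  refine or_iff_not_imp_left.mpr fun hne =>
    absNorm_le_pow_of_places_le hxt (sub_ne_zero.mpr hne) fun w => ?_
  calc w ((x - t : 𝓞 F) : F) = w ((x : F) - t) := by push_cast; rfl
    _ ≤ w x + w t := w.1.sub_le_add _ _
    _ ≤ N + C := add_le_add (mem_ballNF_iff.mp hx w) (ht w)

def floorCoords (s : ℝ) (x : 𝓞 F) : InfinitePlace F → ℤ × ℤ :=
  fun w => (⌊(w.embedding x).re / s⌋, ⌊(w.embedding x).im / s⌋)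

theorem place_sub_lt_of_floorCoords_eq {s : ℝ} (hs : 0 < s) {x y : 𝓞 F}
    (h : floorCoords s x = floorCoords s y) (w : InfinitePlace F) :
    w ((x - y : 𝓞 F) : F) < 2 * s := by
  have hre := abs_sub_lt_of_floor_div_eq hs (congrArg Prod.fst (congrFun h w))
  have him := abs_sub_lt_of_floor_div_eq hs (congrArg Prod.snd (congrFun h w))
  rw [← InfinitePlace.norm_embedding_eq]
  calc ‖w.embedding ((x - y : 𝓞 F) : F)‖
      ≤ |(w.embedding x).re - (w.embedding y).re| + |(w.embedding x).im - (w.embedding y).im| := by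
        simpa using Complex.norm_le_abs_re_add_abs_im (w.embedding x - w.embedding y)
    _ < 2 * s := by linarith

open Classical in
def placeBox (K : ℕ) : Finset (InfinitePlace F → ℤ × ℤ) :=
  Fintype.piFinset fun w =>
    Finset.Icc (-(K : ℤ)) K ×ˢ if w.IsReal then {0} else Finset.Icc (-(K : ℤ)) K

theorem card_placeBox (K : ℕ) :
    (placeBox (F := F) K).card = (2 * K + 1) ^ Module.finrank ℚ F := by
  have hIcc : (Finset.Icc (-(K : ℤ)) K).card = 2 * K + 1 := by
    rw [Int.card_Icc]; omega
  classical
  rw [placeBox, Fintype.card_piFinset, ← InfinitePlace.sum_mult_eq, ← Finset.prod_pow_eq_pow_sum]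
  refine Finset.prod_congr rfl fun w _ => ?_
  rw [Finset.card_product, hIcc, InfinitePlace.mult]
  split_ifs <;> simp [hIcc, pow_succ]

theorem floorCoords_mem_placeBox {s : ℝ} (hs : 0 < s) {N : ℕ} {x : 𝓞 F}
    (hx : x ∈ ballNF F N) : floorCoords s x ∈ placeBox ⌈(N : ℝ) / s⌉₊ := by
  classical
  rw [placeBox, Fintype.mem_piFinset]
  intro w
  have hw : ‖w.embedding x‖ ≤ N := by
    rw [InfinitePlace.norm_embedding_eq]; exact mem_ballNF_iff.mp hx w
  refine Finset.mem_product.mpr ⟨floor_div_mem_Icc hs ((Complex.abs_re_le_norm _).trans hw), ?_⟩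
  split_ifs with hreal
  · have him : (w.embedding x).im = 0 := by
      rw [← InfinitePlace.embedding_of_isReal_apply hreal]; exact Complex.ofReal_im _
    simp [floorCoords, him]
  · exact floor_div_mem_Icc hs ((Complex.abs_im_le_norm _).trans hw)

theorem ncard_le_of_subset_ballNF_of_sub_mem {b : Ideal (𝓞 F)} (hb : 0 < Ideal.absNorm b) {N : ℕ}
    {D : Set (𝓞 F)} (hD : D ⊆ ballNF F N) (hDb : ∀ x ∈ D, ∀ y ∈ D, x - y ∈ b) :
    (D.ncard : ℝ) ≤ 8 ^ Module.finrank ℚ F * N ^ Module.finrank ℚ F / Ideal.absNorm b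
      + 6 ^ Module.finrank ℚ F := by
  set n := Module.finrank ℚ F
  set q : ℝ := (Ideal.absNorm b : ℝ)
  have hq : 0 < q := Nat.cast_pos.mpr hb
  -- two points of `D` in one cell of side `s` differ by an element of `b` of norm `< (2s)^n = q`
  set s : ℝ := q ^ (n⁻¹ : ℝ) / 2
  have hs : 0 < s := by positivity
  have h2s : (2 * s) ^ n = q := by
    rw [mul_div_cancel₀ _ two_ne_zero]
    exact Real.rpow_inv_natCast_pow hq.le Module.finrank_pos.ne'
  have hinj : Set.InjOn (floorCoords s) D := fun x hx y hy hxy => by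
    by_contra hne
    exact (absNorm_lt_pow_of_places_lt (hDb x hx y hy) (sub_ne_zero.mpr hne)
      (place_sub_lt_of_floorCoords_eq hs hxy)).ne h2s.symm
  have hcard : D.ncard ≤ (2 * ⌈(N : ℝ) / s⌉₊ + 1) ^ n := by
    rw [← card_placeBox, ← Set.ncard_coe_finset]
    exact Set.ncard_le_ncard_of_injOn _ (fun x hx => floorCoords_mem_placeBox hs (hD hx)) hinj
  have hceil : (⌈(N : ℝ) / s⌉₊ : ℝ) < N / s + 1 := Nat.ceil_lt_add_one (by positivity)
  have h4 : 4 * (N : ℝ) / (2 * s) = 2 * (N / s) := by field_simp; ring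
  calc (D.ncard : ℝ) ≤ (2 * ⌈(N : ℝ) / s⌉₊ + 1 : ℝ) ^ n := by exact_mod_cast hcard
    _ ≤ (4 * N / (2 * s) + 3) ^ n := pow_le_pow_left₀ (by positivity) (by linarith) n
    _ ≤ 2 ^ (n - 1) * ((4 * N / (2 * s)) ^ n + 3 ^ n) := add_pow_le (by positivity) (by norm_num) n
    _ ≤ 2 ^ n * ((4 * N / (2 * s)) ^ n + 3 ^ n) := by gcongr <;> [norm_num; omega]
    _ = 8 ^ n * N ^ n / q + 6 ^ n := by
        have h8 : (8 : ℝ) ^ n = 2 ^ n * 4 ^ n := by rw [← mul_pow]; norm_num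
        have h6 : (6 : ℝ) ^ n = 2 ^ n * 3 ^ n := by rw [← mul_pow]; norm_num
        rw [div_pow, h2s, h8, h6]
        ring

theorem exists_div_pow_le_ncard_ballNF :
    ∃ c : ℝ, 0 < c ∧ ∀ N : ℕ, ((N : ℝ) / c) ^ Module.finrank ℚ F ≤ (ballNF F N).ncard := by
  classical
  set B := RingOfIntegers.basis F
  set C : ℝ := ∑ j, ∑ w : InfinitePlace F, w (B j : F)
  have hBC (w : InfinitePlace F) : ∑ j, w (B j : F) ≤ C :=
    Finset.sum_le_sum fun j _ => Finset.single_le_sum (f := fun w => w (B j : F))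
      (fun w _ => w.1.nonneg _) (Finset.mem_univ w)
  have hC1 : 0 < C + 1 := by positivity
  refine ⟨C + 1, hC1, fun N => ?_⟩
  set k := ⌊(N : ℝ) / (C + 1)⌋₊
  set box : Finset (Module.Free.ChooseBasisIndex ℤ (𝓞 F) → ℤ) :=
    Fintype.piFinset fun _ => Finset.Icc (-(k : ℤ)) k
  have hk : (k : ℝ) * C ≤ N := by
    have := (le_div_iff₀ hC1).mp (Nat.floor_le (a := (N : ℝ) / (C + 1)) (by positivity))
    nlinarith [(Nat.cast_nonneg k : (0 : ℝ) ≤ k)]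
  have hmaps : ∀ a ∈ box, B.equivFun.symm a ∈ ballNF F N := by
    intro a ha
    refine mem_ballNF_iff.mpr fun w => ?_
    have hak (j) : |(a j : ℝ)| ≤ k := by
      have := Finset.mem_Icc.mp (Fintype.mem_piFinset.mp ha j)
      rw [abs_le]; constructor <;> exact_mod_cast (by omega)
    calc w ((B.equivFun.symm a : 𝓞 F) : F) ≤ ∑ j, |(a j : ℝ)| * w (B j : F) := by
          rw [B.equivFun_symm_apply]; exact place_sum_zsmul_le _ _ _ w
      _ ≤ ∑ j, k * w (B j : F) :=
          Finset.sum_le_sum fun j _ => mul_le_mul_of_nonneg_right (hak j) (by positivity)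
      _ ≤ k * C := by rw [← Finset.mul_sum]; gcongr; exact hBC w
      _ ≤ N := hk
  have hbox : box.card = (2 * k + 1) ^ Module.finrank ℚ F := by
    rw [Fintype.card_piFinset, Finset.prod_const, Int.card_Icc, Finset.card_univ,
      ← Module.finrank_eq_card_chooseBasisIndex, RingOfIntegers.rank]
    congr 1; omega
  calc ((N : ℝ) / (C + 1)) ^ Module.finrank ℚ F ≤ (2 * k + 1 : ℝ) ^ Module.finrank ℚ F := by
        have := Nat.lt_floor_add_one ((N : ℝ) / (C + 1))
        exact pow_le_pow_left₀ (by positivity) (by linarith [(Nat.cast_nonneg k : (0 : ℝ) ≤ k)]) _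
    _ = box.card := by rw [hbox]; push_cast; ring
    _ ≤ (ballNF F N).ncard := by
        rw [← Set.ncard_coe_finset]
        exact_mod_cast
          Set.ncard_le_ncard_of_injOn _ hmaps B.equivFun.symm.injective.injOn (ballNF_finite N)

theorem ncard_coset_inter_ballNF_le {b : Ideal (𝓞 F)} (hb : 0 < Ideal.absNorm b) (t : 𝓞 F)
    {N : ℕ} {X : ℝ} (hNX : (N : ℝ) ^ Module.finrank ℚ F ≤ X) (hbX : (Ideal.absNorm b : ℝ) ≤ X) :
    (({x | x - t ∈ b} ∩ ballNF F N).ncard : ℝ) ≤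
      (8 ^ Module.finrank ℚ F + 6 ^ Module.finrank ℚ F) * X / Ideal.absNorm b := by
  set n := Module.finrank ℚ F
  have hq : (0 : ℝ) < Ideal.absNorm b := Nat.cast_pos.mpr hb
  have hsub : ∀ x ∈ {x | x - t ∈ b} ∩ ballNF F N, ∀ y ∈ {x | x - t ∈ b} ∩ ballNF F N,
      x - y ∈ b := fun x hx y hy => by
    have hxt : x - t ∈ b := hx.1
    have hyt : y - t ∈ b := hy.1
    simpa using sub_mem hxt hyt
  calc (({x | x - t ∈ b} ∩ ballNF F N).ncard : ℝ)
      ≤ 8 ^ n * (N : ℝ) ^ n / Ideal.absNorm b + 6 ^ n :=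
        ncard_le_of_subset_ballNF_of_sub_mem hb Set.inter_subset_right hsub
    _ ≤ 8 ^ n * X / Ideal.absNorm b + 6 ^ n * X / Ideal.absNorm b := by
        gcongr
        rw [le_div_iff₀ hq]
        exact mul_le_mul_of_nonneg_left hbX (by positivity)
    _ = _ := by ring

theorem ncard_iUnion_inter_ballNF_le {b : ℕ → Ideal (𝓞 F)} (hb : ∀ k, 0 < Ideal.absNorm (b k))
    (hsum : Summable fun k => 1 / (Ideal.absNorm (b k) : ℝ)) {T : Finset (𝓞 F)} {C : ℝ}
    (hC : ∀ t ∈ T, ∀ w : InfinitePlace F, w (t : F) ≤ C) (hC0 : 0 ≤ C) {R : ℕ → Set (𝓞 F)}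
    (hR : ∀ k, R k ⊆ (T : Set (𝓞 F)) + (b k : Set (𝓞 F))) (N : ℕ) :
    (((⋃ k, R k) ∩ ballNF F N).ncard : ℝ) ≤ T.card + T.card *
      (8 ^ Module.finrank ℚ F + 6 ^ Module.finrank ℚ F) * (∑' k, 1 / (Ideal.absNorm (b k) : ℝ)) *
        (N + C) ^ Module.finrank ℚ F := by
  classical
  set n := Module.finrank ℚ F
  set X : ℝ := (N + C) ^ n
  set q : ℕ → ℝ := fun k => (Ideal.absNorm (b k) : ℝ)
  have hq (k : ℕ) : 0 < q k := Nat.cast_pos.mpr (hb k)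
  have hJ := finite_setOf_le_of_summable_one_div hq hsum X
  set J := hJ.toFinset
  set D : ℕ → 𝓞 F → Set (𝓞 F) := fun k t => {x | x - t ∈ b k} ∩ ballNF F N
  have hcover : (⋃ k, R k) ∩ ballNF F N ⊆ ↑T ∪ ⋃ k ∈ J, ⋃ t ∈ T, D k t := by
    rintro x ⟨hxR, hxB⟩
    obtain ⟨k, hxk⟩ := Set.mem_iUnion.mp hxR
    obtain ⟨t, ht, β, hβ, hx⟩ := hR k hxk
    have hmem : x - t ∈ b k := by rw [← hx]; simpa using hβ
    rcases eq_or_absNorm_le_of_sub_mem hxB (hC t ht) hmem with h | h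
    · exact Or.inl (by rw [h]; exact ht)
    · exact Or.inr (Set.mem_biUnion (hJ.mem_toFinset.mpr h) (Set.mem_biUnion ht ⟨hmem, hxB⟩))
  have hfin : (↑T ∪ ⋃ k ∈ J, ⋃ t ∈ T, D k t).Finite :=
    T.finite_toSet.union (J.finite_toSet.biUnion fun k _ =>
      T.finite_toSet.biUnion fun t _ => (ballNF_finite N).subset Set.inter_subset_right)
  have hcount : ((⋃ k, R k) ∩ ballNF F N).ncard ≤ T.card + ∑ k ∈ J, ∑ t ∈ T, (D k t).ncard :=
    calc ((⋃ k, R k) ∩ ballNF F N).ncard ≤ (↑T ∪ ⋃ k ∈ J, ⋃ t ∈ T, D k t).ncard :=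
          Set.ncard_le_ncard hcover hfin
      _ ≤ (T : Set (𝓞 F)).ncard + (⋃ k ∈ J, ⋃ t ∈ T, D k t).ncard := Set.ncard_union_le _ _
      _ ≤ T.card + ∑ k ∈ J, ∑ t ∈ T, (D k t).ncard := by
          rw [Set.ncard_coe_finset]
          gcongr
          exact (J.set_ncard_biUnion_le _).trans
            (Finset.sum_le_sum fun k _ => T.set_ncard_biUnion_le _)
  have hNX : (N : ℝ) ^ n ≤ X := pow_le_pow_left₀ (by positivity) (by linarith) n
  calc (((⋃ k, R k) ∩ ballNF F N).ncard : ℝ)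
      ≤ T.card + ∑ k ∈ J, ∑ t ∈ T, ((D k t).ncard : ℝ) := by exact_mod_cast hcount
    _ ≤ T.card + ∑ k ∈ J, ∑ t ∈ T, (8 ^ n + 6 ^ n) * X / q k := by
        gcongr with k hk t
        exact ncard_coset_inter_ballNF_le (hb k) t hNX (hJ.mem_toFinset.mp hk)
    _ = T.card + T.card * (8 ^ n + 6 ^ n) * X * ∑ k ∈ J, 1 / q k := by
        simp only [Finset.sum_const, nsmul_eq_mul, Finset.mul_sum, mul_assoc, mul_one_div,
          mul_div_assoc]
    _ ≤ T.card + T.card * (8 ^ n + 6 ^ n) * (∑' k, 1 / q k) * X := by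
        rw [mul_right_comm _ X]
        gcongr
        exact hsum.sum_le_tsum J fun k _ => (one_div_pos.mpr (hq k)).le

theorem exists_upperDensity_iUnion_le (T : Finset (𝓞 F)) :
    ∃ A : ℝ, ∀ (b : ℕ → Ideal (𝓞 F)) (R : ℕ → Set (𝓞 F)), (∀ k, 0 < Ideal.absNorm (b k)) →
      Summable (fun k => 1 / (Ideal.absNorm (b k) : ℝ)) →
      (∀ k, R k ⊆ (T : Set (𝓞 F)) + (b k : Set (𝓞 F))) →
      upperDensity (fun N => ballNF F N) (⋃ k, R k) ≤ A * ∑' k, 1 / (Ideal.absNorm (b k) : ℝ) := by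
  obtain ⟨c, hc, hball⟩ := exists_div_pow_le_ncard_ballNF (F := F)
  set n := Module.finrank ℚ F
  set C : ℝ := ∑ t ∈ T, ∑ w : InfinitePlace F, w (t : F)
  have hC0 : 0 ≤ C := Finset.sum_nonneg fun t _ => Finset.sum_nonneg fun w _ => w.1.nonneg _
  have hC (t) (ht : t ∈ T) (w : InfinitePlace F) : w (t : F) ≤ C :=
    (Finset.single_le_sum (f := fun w : InfinitePlace F => w (t : F)) (fun w _ => w.1.nonneg _)
      (Finset.mem_univ w)).trans
    (Finset.single_le_sum (f := fun t : 𝓞 F => ∑ w : InfinitePlace F, w (t : F))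
      (fun t _ => Finset.sum_nonneg fun w _ => w.1.nonneg _) ht)
  refine ⟨T.card * (8 ^ n + 6 ^ n) * c ^ n, fun b R hb hsum hR => ?_⟩
  set σ := ∑' k, 1 / (Ideal.absNorm (b k) : ℝ)
  have hσ : 0 ≤ σ := tsum_nonneg fun k => by positivity
  have hn : n ≠ 0 := Module.finrank_pos.ne'
  refine (upperDensity_le_of_tendsto (tendsto_add_mul_pow_div_pow T.card
    (T.card * (8 ^ n + 6 ^ n) * σ) C hc.ne' hn) ?_).trans_eq (by ring)
  filter_upwards [eventually_ge_atTop 1] with N hN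
  have hpos : 0 < ((N : ℝ) / c) ^ n := by
    have : (0 : ℝ) < N := by exact_mod_cast hN
    positivity
  rw [Nat.card_coe_set_eq, Nat.card_coe_set_eq]
  exact div_le_div₀ (by positivity) (ncard_iUnion_inter_ballNF_le hb hsum hC hC0 hR N) hpos
    (hball N)

end NumberField

theorem strong_light_tails_of_bounded_reps_number_field
    (F : Type) [Field F] [NumberField F]
    (S : Sieve (NumberField.RingOfIntegers F))
    (T : Finset (NumberField.RingOfIntegers F))
    (hT : ∀ i, S.RSet i ⊆ (↑T : Set (NumberField.RingOfIntegers F))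
        + (↑(S.b i) : Set (NumberField.RingOfIntegers F)))
    (hsum : Summable fun i => 1 / (S.normb i : ℝ)) :
    S.HasStrongLightTails (fun N => ballNF F N) := by
  have hsum' : Summable fun i => 1 / (Ideal.absNorm (S.b i) : ℝ) := by
    simpa only [S.normb_eq_absNorm] using hsum
  obtain ⟨A, hA⟩ := exists_upperDensity_iUnion_le T
  refine ⟨S.isErdos_of_subset_add hT hsum, strongLightTailsFam_of_le
    (τ := fun L => A * ∑' k, 1 / (Ideal.absNorm (S.b (k + L)) : ℝ)) ?_ fun L => ?_⟩
  · simpa using (tendsto_sum_nat_add fun i => 1 / (Ideal.absNorm (S.b i) : ℝ)).const_mul A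
  · rw [unionGe_eq_iUnion_add]
    exact hA _ _ (fun k => S.absNorm_pos _) ((summable_nat_add_iff L).mpr hsum') fun k => hT _

end ErdosSieve
end
end
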